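/- The optimal cost of the example problem equals C[u*] = ∫₀³ (x*(t)² + u*(t)²) dt = -S(0, x*(0)) = -(η₁(0)·1 + c₁(0)), i.e., ∫₀³ (x*(t)² + u*(t)²) dt = -c₁(0) - η₁(0), where η₁(0) = 5 + 2(e²-1)/(e²+1)² and c₁(0) = (1 - e^{4} - 15e⁴ - 32e² - 9)/(2(e²+1)²) = (-16e⁴ - 32e² - 8)/(2(e²+1)²). -/

import Mathlib

open Real

noncomputable def xstar (t : ℝ) : ℝ :=
  if t ≤ 2 then 1 else (exp (t - 2) + exp (4 - t)) / (exp 2 + 1)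

noncomputable def ustar (t : ℝ) : ℝ :=
  if t < 0 then 0
  else if t ≤ 1 then (exp t - exp (2 - t)) / (exp 2 + 1)
  else 0

noncomputable def eta1 (t : ℝ) : ℝ := -2 * t + 5 + 2 * (exp 2 - 1) / (exp 2 + 1) ^ 2

noncomputable def c1 (t : ℝ) : ℝ :=
  (2 * t * (3 * exp 4 + 4 * exp 2 + 3) + exp (2 * t) - exp (4 - 2 * t) -
    15 * exp 4 - 32 * exp 2 - 9) / (2 * (exp 2 + 1) ^ 2)

lemma expE_ne : (exp 2 + 1) ≠ 0 := by positivity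

lemma exp4_eq : exp (4:ℝ) = exp 2 * exp 2 := by
  rw [← Real.exp_add]; norm_num

/-- nice form of the integrand on [0,1] -/
noncomputable def f1 (t : ℝ) : ℝ := 1 + ((exp t - exp (2 - t)) / (exp 2 + 1)) ^ 2

/-- nice form of the integrand on [2,3] -/
noncomputable def f3 (t : ℝ) : ℝ := ((exp (t - 2) + exp (4 - t)) / (exp 2 + 1)) ^ 2

noncomputable def F1 (t : ℝ) : ℝ :=
  t + (exp (2 * t) - 4 * exp 2 * t - exp (4 - 2 * t)) / (2 * (exp 2 + 1) ^ 2)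

noncomputable def F3 (t : ℝ) : ℝ :=
  (exp (2 * t - 4) + 4 * exp 2 * t - exp (8 - 2 * t)) / (2 * (exp 2 + 1) ^ 2)

lemma cont_f1 : Continuous f1 := by unfold f1; continuity

lemma cont_f3 : Continuous f3 := by unfold f3; continuity

lemma hasDerivAt_F1 (t : ℝ) : HasDerivAt F1 (f1 t) t := by
  have h1 : HasDerivAt (fun t : ℝ => exp (2 * t)) (2 * exp (2 * t)) t := by
    simpa [mul_comm] using (((hasDerivAt_id t).const_mul (2:ℝ)).exp)
  have h2 : HasDerivAt (fun t : ℝ => exp (4 - 2 * t)) (-2 * exp (4 - 2 * t)) t := by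
    simpa [mul_comm] using
      (((hasDerivAt_const t (4:ℝ)).sub ((hasDerivAt_id t).const_mul (2:ℝ))).exp)
  have h3 : HasDerivAt (fun t : ℝ => 4 * exp 2 * t) (4 * exp 2) t := by
    simpa using ((hasDerivAt_id t).const_mul (4 * exp 2))
  have hA := (hasDerivAt_id t).add (((h1.sub h3).sub h2).div_const (2 * (exp 2 + 1) ^ 2))
  refine hA.congr_deriv ?_
  have he1 : exp t * exp (2 - t) = exp 2 := by rw [← Real.exp_add]; ring_nf
  have he2 : exp (2 * t) = exp t * exp t := by rw [← Real.exp_add]; ring_nf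
  have he3 : exp (4 - 2 * t) = exp (2 - t) * exp (2 - t) := by rw [← Real.exp_add]; ring_nf
  unfold f1
  field_simp
  nlinarith [he1, he2, he3]

lemma hasDerivAt_F3 (t : ℝ) : HasDerivAt F3 (f3 t) t := by
  have h1 : HasDerivAt (fun t : ℝ => exp (2 * t - 4)) (2 * exp (2 * t - 4)) t := by
    simpa [mul_comm] using
      ((((hasDerivAt_id t).const_mul (2:ℝ)).sub (hasDerivAt_const t (4:ℝ))).exp)
  have h2 : HasDerivAt (fun t : ℝ => exp (8 - 2 * t)) (-2 * exp (8 - 2 * t)) t := by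
    simpa [mul_comm] using
      (((hasDerivAt_const t (8:ℝ)).sub ((hasDerivAt_id t).const_mul (2:ℝ))).exp)
  have h3 : HasDerivAt (fun t : ℝ => 4 * exp 2 * t) (4 * exp 2) t := by
    simpa using ((hasDerivAt_id t).const_mul (4 * exp 2))
  have hA := ((h1.add h3).sub h2).div_const (2 * (exp 2 + 1) ^ 2)
  refine hA.congr_deriv ?_
  have he1 : exp (t - 2) * exp (4 - t) = exp 2 := by rw [← Real.exp_add]; ring_nf
  have he2 : exp (2 * t - 4) = exp (t - 2) * exp (t - 2) := by rw [← Real.exp_add]; ring_nf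
  have he3 : exp (8 - 2 * t) = exp (4 - t) * exp (4 - t) := by rw [← Real.exp_add]; ring_nf
  unfold f3
  field_simp
  nlinarith [he1, he2, he3]

lemma eqOn1 : Set.EqOn (fun t => xstar t ^ 2 + ustar t ^ 2) f1 (Set.Icc (0:ℝ) 1) := by
  intro t ht
  simp only [Set.mem_Icc] at ht
  simp only [xstar, ustar, f1]
  rw [if_pos (by linarith), if_neg (by linarith), if_pos ht.2]
  ring

lemma u_eq_zero {t : ℝ} (ht : 1 ≤ t) : ustar t = 0 := by
  unfold ustar
  split_ifs with h h'
  · rfl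
  · have : t = 1 := le_antisymm h' ht
    subst this
    norm_num
  · rfl

lemma eqOn2 : Set.EqOn (fun t => xstar t ^ 2 + ustar t ^ 2) (fun _ => (1:ℝ)) (Set.Icc (1:ℝ) 2) := by
  intro t ht
  simp only [Set.mem_Icc] at ht
  simp only
  rw [u_eq_zero ht.1]
  unfold xstar
  rw [if_pos ht.2]
  ring

lemma eqOn3 : Set.EqOn (fun t => xstar t ^ 2 + ustar t ^ 2) f3 (Set.Icc (2:ℝ) 3) := by
  intro t ht
  simp only [Set.mem_Icc] at ht
  simp only
  rw [u_eq_zero (by linarith [ht.1])]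
  unfold xstar f3
  split_ifs with h
  · have : t = 2 := le_antisymm h ht.1
    subst this
    norm_num
    have := expE_ne
    field_simp
    ring
  · ring

lemma int_piece {a b : ℝ} (hab : a ≤ b) {g : ℝ → ℝ} (hg : Continuous g)
    (heq : Set.EqOn (fun t => xstar t ^ 2 + ustar t ^ 2) g (Set.Icc a b)) :
    IntervalIntegrable (fun t => xstar t ^ 2 + ustar t ^ 2) MeasureTheory.volume a b := by
  rw [intervalIntegrable_iff_integrableOn_Icc_of_le hab]
  exact (hg.integrableOn_Icc).congr_fun (fun x hx => (heq hx).symm) measurableSet_Icc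

lemma int_eq_piece {a b : ℝ} (hab : a ≤ b) {g : ℝ → ℝ}
    (heq : Set.EqOn (fun t => xstar t ^ 2 + ustar t ^ 2) g (Set.Icc a b)) :
    ∫ t in a..b, (xstar t ^ 2 + ustar t ^ 2) = ∫ t in a..b, g t := by
  apply intervalIntegral.integral_congr
  rwa [Set.uIcc_of_le hab]

/-- The optimal cost of the example equals -S(0, x*(0)) = -(η₁(0)·1 + c₁(0)). -/
theorem optimal_cost_value :
    ∫ t in (0 : ℝ)..3, (xstar t ^ 2 + ustar t ^ 2) = -(eta1 0 * 1 + c1 0) := by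
  have hi1 := int_piece (by norm_num : (0:ℝ) ≤ 1) cont_f1 eqOn1
  have hi2 := int_piece (by norm_num : (1:ℝ) ≤ 2) continuous_const eqOn2
  have hi3 := int_piece (by norm_num : (2:ℝ) ≤ 3) cont_f3 eqOn3
  have hsplit : ∫ t in (0:ℝ)..3, (xstar t ^ 2 + ustar t ^ 2) =
      (∫ t in (0:ℝ)..1, (xstar t ^ 2 + ustar t ^ 2)) +
      (∫ t in (1:ℝ)..2, (xstar t ^ 2 + ustar t ^ 2)) +
      (∫ t in (2:ℝ)..3, (xstar t ^ 2 + ustar t ^ 2)) := by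
    rw [add_assoc, intervalIntegral.integral_add_adjacent_intervals hi2 hi3,
      intervalIntegral.integral_add_adjacent_intervals hi1 (hi2.trans hi3)]
  rw [hsplit, int_eq_piece (by norm_num) eqOn1, int_eq_piece (by norm_num) eqOn2,
    int_eq_piece (by norm_num) eqOn3]
  have e1 : ∫ t in (0:ℝ)..1, f1 t = F1 1 - F1 0 :=
    intervalIntegral.integral_eq_sub_of_hasDerivAt (fun t _ => hasDerivAt_F1 t)
      (cont_f1.intervalIntegrable 0 1)
  have e3 : ∫ t in (2:ℝ)..3, f3 t = F3 3 - F3 2 :=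
    intervalIntegral.integral_eq_sub_of_hasDerivAt (fun t _ => hasDerivAt_F3 t)
      (cont_f3.intervalIntegrable 2 3)
  rw [e1, e3, intervalIntegral.integral_const]
  unfold F1 F3 eta1 c1
  norm_num [exp4_eq]
  have h := expE_ne
  field_simp
  ring
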